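/- Let G be a 3-edge-connected graph with DFS tree T, and let v' be a proper ancestor of v with high(v') = high(v), where both v and v' have proper ancestors with the same M-value (i.e., nextM(v) ≠ ∅ and nextM(v') ≠ ∅). Then nextM(v) is a proper ancestor of lastM(v'); in preorder numbers, nextM(v) < lastM(v'). -/

import Mathlib

/-!
If `w` is a proper ancestor of `v` with `M(w) = M(v)`, then `w` is an ancestor of `high(v)`:
otherwise `B(w) = B(v)`, and the tree edges above `w` and `v` would form a 2-edge cut.
Since `high(v) = high(v')` is a proper ancestor of `v'`, we have `B(v) ⊆ B(v')`, so `M(v')` is an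
ancestor of `M(v)`, and the fact above applied to `v'` gives `M(v') ≠ M(v)`. Applied to
`nextM(v)`, it places `nextM(v)` above `high(v)`, hence above `v'`. If `lastM(v')` were not
below `nextM(v)`, it would be a proper ancestor of it with `B(lastM(v')) ⊆ B(nextM(v))`,
forcing `M(v) = M(v')`.
-/

variable {V E : Type}

/-- Reachability in the multigraph with edge-endpoint map `ends`,
avoiding (i.e. after deleting) the edges in `S`. -/
def Reach (ends : E → V × V) (S : Set E) : V → V → Prop :=
  Relation.ReflTransGen (fun a b => ∃ e, e ∉ S ∧ (ends e = (a, b) ∨ ends e = (b, a)))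

/-- The multigraph is connected. -/
def Connected (ends : E → V × V) : Prop := ∀ u v : V, Reach ends ∅ u v

/-- `u` and `v` are `k`-edge-connected: no set of at most `k - 1` edges separates them. -/
def KConn (ends : E → V × V) (k : ℕ) (u v : V) : Prop :=
  ∀ S : Finset E, S.card ≤ k - 1 → Reach ends (↑S) u v

/-- The multigraph is `k`-edge-connected: no edge cut of size less than `k`. -/
def GraphKConn (ends : E → V × V) (k : ℕ) : Prop :=
  ∀ S : Finset E, S.card < k → ∀ u v : V, Reach ends (↑S) u v

/-- `S` is an edge cut: removing it disconnects the graph. -/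
def IsCutSet (ends : E → V × V) (S : Set E) : Prop :=
  ∃ u v : V, ¬ Reach ends S u v

/-- A (candidate) DFS tree on the multigraph `ends : E → V × V`: a root, a parent
function, a choice of a tree edge for each non-root vertex, and a preorder numbering. -/
structure DFSTree (V E : Type) where
  ends : E → V × V
  root : V
  parent : V → V
  treeEdge : V → E
  pre : V → ℕ

namespace DFSTree

variable (t : DFSTree V E)

/-- `t.Anc a b` : `a` is an ancestor of `b` (every vertex is an ancestor of itself). -/
def Anc (a b : V) : Prop :=
  Relation.ReflTransGen (fun x y => x ≠ t.root ∧ y = t.parent x) b a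

/-- `a` is a proper ancestor of `b`. -/
def ProperAnc (a b : V) : Prop := t.Anc a b ∧ a ≠ b

def IsTreeEdge (e : E) : Prop := ∃ v, v ≠ t.root ∧ e = t.treeEdge v

/-- The set `B(v)`: back-edges `(x, y)` with `x` a descendant of `v` and `y` a
proper ancestor of `v`. -/
def B (v : V) : Set E :=
  {e | ¬ t.IsTreeEdge e ∧ t.Anc v (t.ends e).1 ∧ t.ProperAnc (t.ends e).2 v}

/-- `m` is the nearest common ancestor of the set `S` of vertices. -/
def IsNCA (S : Set V) (m : V) : Prop :=
  (∀ x ∈ S, t.Anc m x) ∧ ∀ m' : V, (∀ x ∈ S, t.Anc m' x) → t.Anc m' m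

/-- `m = M(v)`: the nearest common ancestor of all lower ends of back-edges in `B(v)`. -/
def IsM (v m : V) : Prop := t.IsNCA {x | ∃ e ∈ t.B v, (t.ends e).1 = x} m

/-- `h = high(v)`: the highest (in preorder) upper end of a back-edge in `B(v)`. -/
def IsHigh (v h : V) : Prop :=
  (∃ e ∈ t.B v, (t.ends e).2 = h) ∧ ∀ e ∈ t.B v, t.pre (t.ends e).2 ≤ t.pre h

/-- `l = low(v)`: the lowest (in preorder) upper end of a back-edge in `B(v)`. -/
def IsLow (v l : V) : Prop :=
  (∃ e ∈ t.B v, (t.ends e).2 = l) ∧ ∀ e ∈ t.B v, t.pre l ≤ t.pre (t.ends e).2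

/-- `v` and `w` have the same `M`-value. -/
def SameM (v w : V) : Prop := ∃ m, t.IsM v m ∧ t.IsM w m

/-- `n = nextM(v)`: the greatest vertex smaller than `v` with the same `M`-value. -/
def IsNextM (v n : V) : Prop :=
  t.pre n < t.pre v ∧ t.SameM v n ∧
    ∀ z, t.pre z < t.pre v → t.SameM v z → t.pre z ≤ t.pre n

/-- `l = lastM(v)`: the smallest vertex with the same `M`-value as `v`. -/
def IsLastM (v l : V) : Prop :=
  t.SameM v l ∧ ∀ z, t.SameM v z → t.pre l ≤ t.pre z

/-- `t` really is a DFS spanning tree of the connected multigraph `ends`. -/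
structure IsDFS : Prop where
  conn : Connected t.ends
  parent_root : t.parent t.root = t.root
  tree_ends : ∀ v, v ≠ t.root → t.ends (t.treeEdge v) = (v, t.parent v)
  treeEdge_inj : ∀ v w, v ≠ t.root → w ≠ t.root → t.treeEdge v = t.treeEdge w → v = w
  back : ∀ e, ¬ t.IsTreeEdge e → t.Anc (t.ends e).2 (t.ends e).1
  pre_inj : Function.Injective t.pre
  pre_mono : ∀ a b, t.Anc a b → t.pre a ≤ t.pre b
  pre_interval : ∀ a b : V,
    t.pre a ≤ t.pre b → t.pre b < t.pre a + {x | t.Anc a x}.ncard → t.Anc a b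

end DFSTree

lemma Reach.mem_of_forall_iff {ends : E → V × V} {S : Set E} {W : Set V}
    (hW : ∀ e ∉ S, (ends e).1 ∈ W ↔ (ends e).2 ∈ W) {a b : V} (hab : Reach ends S a b)
    (ha : a ∈ W) : b ∈ W := by
  induction hab with
  | refl => exact ha
  | tail _ hstep ih =>
    obtain ⟨e, he, hends | hends⟩ := hstep
    · have hiff := hW e he
      rw [hends] at hiff
      exact hiff.mp ih
    · have hiff := hW e he
      rw [hends] at hiff
      exact hiff.mpr ih

namespace DFSTree

variable {t : DFSTree V E}

lemma anc_refl (a : V) : t.Anc a a := Relation.ReflTransGen.refl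

lemma Anc.trans {a b c : V} (hab : t.Anc a b) (hbc : t.Anc b c) : t.Anc a c :=
  Relation.ReflTransGen.trans hbc hab

lemma anc_iff_anc_parent {a z : V} (hz : z ≠ t.root) (haz : a ≠ z) :
    t.Anc a z ↔ t.Anc a (t.parent z) := by
  refine ⟨fun h => ?_, fun h => Relation.ReflTransGen.head ⟨hz, rfl⟩ h⟩
  rcases Relation.ReflTransGen.cases_head h with h' | ⟨c, ⟨-, rfl⟩, h'⟩
  · exact absurd h'.symm haz
  · exact h'

lemma anc_total {a b : V} : ∀ {c : V}, t.Anc a c → t.Anc b c → t.Anc a b ∨ t.Anc b a := by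
  intro c hac
  induction hac using Relation.ReflTransGen.head_induction_on with
  | refl => exact Or.inr
  | @head c d hstep _ ih =>
    intro hbc
    rcases Relation.ReflTransGen.cases_head hbc with rfl | ⟨d', hd', hbd'⟩
    · exact Or.inl (Relation.ReflTransGen.head hstep ‹_›)
    · exact ih (hd'.2.trans hstep.2.symm ▸ hbd')

namespace IsDFS

lemma anc_antisymm (ht : t.IsDFS) {a b : V} (hab : t.Anc a b) (hba : t.Anc b a) : a = b :=
  ht.pre_inj (le_antisymm (ht.pre_mono a b hab) (ht.pre_mono b a hba))

lemma anc_of_pre_le (ht : t.IsDFS) {a b c : V} (hac : t.Anc a c) (hbc : t.Anc b c)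
    (hle : t.pre a ≤ t.pre b) : t.Anc a b := by
  rcases anc_total hac hbc with hab | hba
  · exact hab
  · rw [ht.pre_inj (le_antisymm hle (ht.pre_mono b a hba))]
    exact anc_refl b

lemma properAnc_of_pre_lt (ht : t.IsDFS) {a b c : V} (hac : t.Anc a c) (hbc : t.Anc b c)
    (hlt : t.pre a < t.pre b) : t.ProperAnc a b :=
  ⟨ht.anc_of_pre_le hac hbc hlt.le, by rintro rfl; exact lt_irrefl _ hlt⟩

lemma properAnc_of_anc_of_properAnc (ht : t.IsDFS) {a b c : V} (hab : t.Anc a b)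
    (hbc : t.ProperAnc b c) : t.ProperAnc a c :=
  ⟨hab.trans hbc.1, by rintro rfl; exact hbc.2 (ht.anc_antisymm hbc.1 hab)⟩

lemma properAnc_trans (ht : t.IsDFS) {a b c : V} (hab : t.ProperAnc a b)
    (hbc : t.ProperAnc b c) : t.ProperAnc a c :=
  ht.properAnc_of_anc_of_properAnc hab.1 hbc

lemma mem_B_iff (ht : t.IsDFS) {e : E} (he : ¬ t.IsTreeEdge e) {x : V} :
    e ∈ t.B x ↔ t.Anc x (t.ends e).1 ∧ ¬ t.Anc x (t.ends e).2 := by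
  refine ⟨fun hB => ⟨hB.2.1, fun hx => hB.2.2.2 (ht.anc_antisymm hB.2.2.1 hx)⟩,
    fun ⟨hx1, hx2⟩ => ⟨he, hx1, ?_⟩⟩
  rcases anc_total hx1 (ht.back e he) with hx | hupper
  · exact absurd hx hx2
  · exact ⟨hupper, by rintro rfl; exact hx2 (anc_refl _)⟩

lemma isM_unique (ht : t.IsDFS) {v m m' : V} (hm : t.IsM v m) (hm' : t.IsM v m') : m = m' :=
  ht.anc_antisymm (hm'.2 m hm.1) (hm.2 m' hm'.1)

/-- The subtree of `x` minus the subtree of `y` is left only through the tree edges above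
`x` and `y`, because `B(x) = B(y)` rules out any back edge leaving it. -/
lemma B_ne (ht : t.IsDFS) (h3 : GraphKConn t.ends 3) {x y : V} (hxy : t.ProperAnc x y) :
    t.B x ≠ t.B y := by
  classical
  intro hB
  set S : Finset E := {t.treeEdge x, t.treeEdge y}
  set W : Set V := {w | t.Anc x w ∧ ¬ t.Anc y w}
  have hW : ∀ e ∉ (S : Set E), (t.ends e).1 ∈ W ↔ (t.ends e).2 ∈ W := by
    intro e he
    simp only [S, Finset.coe_insert, Finset.coe_singleton, Set.mem_insert_iff,
      Set.mem_singleton_iff, not_or] at he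
    by_cases hte : t.IsTreeEdge e
    · obtain ⟨z, hz, rfl⟩ := hte
      have hxz : x ≠ z := by rintro rfl; exact he.1 rfl
      have hyz : y ≠ z := by rintro rfl; exact he.2 rfl
      simp only [W, Set.mem_ofPred_eq, ht.tree_ends z hz, anc_iff_anc_parent hz hxz,
        anc_iff_anc_parent hz hyz]
    · have hiff := Set.ext_iff.1 hB e
      rw [ht.mem_B_iff hte, ht.mem_B_iff hte] at hiff
      have hback := ht.back e hte
      have hlow_yx : t.Anc y (t.ends e).1 → t.Anc x (t.ends e).1 := hxy.1.trans
      have hup_yx : t.Anc y (t.ends e).2 → t.Anc x (t.ends e).2 := hxy.1.trans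
      have hx_up_low : t.Anc x (t.ends e).2 → t.Anc x (t.ends e).1 := (·.trans hback)
      have hy_up_low : t.Anc y (t.ends e).2 → t.Anc y (t.ends e).1 := (·.trans hback)
      simp only [W, Set.mem_ofPred_eq]
      tauto
  have hxW : x ∈ W := ⟨anc_refl x, fun hyx => hxy.2 (ht.anc_antisymm hxy.1 hyx)⟩
  have hreach := h3 S (Finset.card_le_two.trans_lt (by norm_num)) x y
  exact (hreach.mem_of_forall_iff hW hxW).2 (anc_refl y)

end IsDFS

lemma IsM.anc {v m : V} (hm : t.IsM v m) : t.Anc v m :=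
  hm.2 v (by rintro _ ⟨e, he, rfl⟩; exact he.2.1)

lemma IsM.anc_of_B_subset {v w m m' : V} (hm : t.IsM v m) (hm' : t.IsM w m')
    (hB : t.B v ⊆ t.B w) : t.Anc m' m :=
  hm.2 m' (by rintro _ ⟨e, he, rfl⟩; exact hm'.1 _ ⟨e, hB he, rfl⟩)

lemma IsM.B_subset (ht : t.IsDFS) {x y m : V} (hm : t.IsM x m) (hym : t.Anc y m)
    (hxy : t.ProperAnc x y) : t.B x ⊆ t.B y :=
  fun e he => ⟨he.1, hym.trans (hm.1 _ ⟨e, he, rfl⟩), ht.properAnc_trans he.2.2 hxy⟩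

lemma IsHigh.properAnc {v h : V} (hH : t.IsHigh v h) : t.ProperAnc h v := by
  obtain ⟨⟨e, he, rfl⟩, -⟩ := hH
  exact he.2.2

lemma IsHigh.anc_of_mem_B (ht : t.IsDFS) {v h : V} (hH : t.IsHigh v h) {e : E}
    (he : e ∈ t.B v) : t.Anc (t.ends e).2 h :=
  ht.anc_of_pre_le he.2.2.1 hH.properAnc.1 (hH.2 e he)

lemma IsHigh.B_subset (ht : t.IsDFS) {v w h : V} (hH : t.IsHigh v h) (hwv : t.Anc w v)
    (hhw : t.ProperAnc h w) : t.B v ⊆ t.B w :=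
  fun _ he => ⟨he.1, hwv.trans he.2.1,
    ht.properAnc_of_anc_of_properAnc (hH.anc_of_mem_B ht he) hhw⟩

lemma IsDFS.anc_high_of_isM (ht : t.IsDFS) (h3 : GraphKConn t.ends 3) {v w h m : V}
    (hH : t.IsHigh v h) (hm : t.IsM v m) (hw : t.IsM w m) (hwv : t.ProperAnc w v) :
    t.Anc w h := by
  rcases anc_total hwv.1 hH.properAnc.1 with hwh | hhw
  · exact hwh
  · obtain rfl | hne := eq_or_ne h w
    · exact anc_refl h
    · exact absurd (subset_antisymm (hw.B_subset ht hm.anc hwv)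
        (hH.B_subset ht hwv.1 ⟨hhw, hne⟩)) (ht.B_ne h3 hwv)

end DFSTree

theorem nextM_lt_lastM_general (t : DFSTree V E) (ht : t.IsDFS)
    (h3 : GraphKConn t.ends 3) (v v' h nv lv' : V)
    (hanc : t.ProperAnc v' v)
    (hH : t.IsHigh v h) (hH' : t.IsHigh v' h)
    (hnext : t.IsNextM v nv)
    (hlast : t.IsLastM v' lv') :
    t.ProperAnc nv lv' ∧ t.pre nv < t.pre lv' := by
  obtain ⟨hnv_lt, ⟨m, hm, hnv_m⟩, -⟩ := hnext
  obtain ⟨⟨m', hm', hlv'_m'⟩, -⟩ := hlast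
  have hm'm : t.Anc m' m := hm.anc_of_B_subset hm' (hH.B_subset ht hanc.1 hH'.properAnc)
  have hmm' : m ≠ m' := by
    rintro rfl
    exact hH'.properAnc.2
      (ht.anc_antisymm hH'.properAnc.1 (ht.anc_high_of_isM h3 hH hm hm' hanc))
  have hnv_v : t.ProperAnc nv v := ht.properAnc_of_pre_lt hnv_m.anc hm.anc hnv_lt
  have hnv_v' : t.ProperAnc nv v' := ht.properAnc_of_anc_of_properAnc
    (ht.anc_high_of_isM h3 hH hm hnv_m hnv_v) hH'.properAnc
  have hlv'_m : t.Anc lv' m := hlv'_m'.anc.trans hm'm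
  have hlt : t.pre nv < t.pre lv' := by
    by_contra! hle
    have hlv'_nv : t.ProperAnc lv' nv := ⟨ht.anc_of_pre_le hlv'_m hnv_m.anc hle,
      by rintro rfl; exact hmm' (ht.isM_unique hnv_m hlv'_m')⟩
    have hmm'' : t.Anc m m' := hlv'_m'.anc_of_B_subset hnv_m
      (hlv'_m'.B_subset ht (hnv_v'.1.trans hm'.anc) hlv'_nv)
    exact hmm' (ht.anc_antisymm hmm'' hm'm)
  exact ⟨ht.properAnc_of_pre_lt hnv_m.anc hlv'_m hlt, hlt⟩

/-- Let `v'` be a proper ancestor of `v` with `high(v') = high(v)`, where both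
`nextM(v)` and `nextM(v')` are defined. Then `nextM(v)` is a proper ancestor of
`lastM(v')`; in preorder numbers, `nextM(v) < lastM(v')`. -/
theorem nextM_lt_lastM (t : DFSTree V E) (ht : t.IsDFS)
    (h3 : GraphKConn t.ends 3) (v v' h nv lv' : V)
    (hanc : t.ProperAnc v' v)
    (hH : t.IsHigh v h) (hH' : t.IsHigh v' h)
    (hnext : t.IsNextM v nv) (hnext' : ∃ n, t.IsNextM v' n)
    (hlast : t.IsLastM v' lv') :
    t.ProperAnc nv lv' ∧ t.pre nv < t.pre lv' :=
  nextM_lt_lastM_general t ht h3 v v' h nv lv' hanc hH hH' hnext hlast
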